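/- arXiv:2501.13907 — 3 statements merged into one kernel-verified Lean document; each statement's English description precedes it below -/
import Mathlib

section
/- For every finite graph G with nonnegative vertex weights, there exists an induced path Q in G such that every connected component of G − N[V(Q)] has weight at most half of the total weight of V(G). -/
/-- Closed neighborhood of a set `S` in a graph `G`. -/
def closedNbhd {V : Type*} (G : SimpleGraph V) (S : Set V) : Set V :=
  S ∪ {v | ∃ s ∈ S, G.Adj s v}

/-- Open neighborhood of a set `S` in a graph `G`. -/
def openNbhd {V : Type*} (G : SimpleGraph V) (S : Set V) : Set V :=
  {v | v ∉ S ∧ ∃ s ∈ S, G.Adj s v}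

/-- Reachability inside the induced subgraph of `G` on the vertex set `T`. -/
def ReachIn {V : Type*} (G : SimpleGraph V) (T : Set V) : V → V → Prop :=
  Relation.ReflTransGen (fun a b => G.Adj a b ∧ a ∈ T ∧ b ∈ T)

/-- Total weight of a vertex set. -/
noncomputable def wsum {V : Type*} [Fintype V] (w : V → ℕ) (S : Set V) : ℕ :=
  ∑ v ∈ S.toFinite.toFinset, w v

/-- `l` is the vertex sequence of an induced path of `G`:
nonempty, no repetitions, and two vertices of `l` are adjacent in `G`
iff they are consecutive in `l`. -/
def IsInducedPathList {V : Type*} (G : SimpleGraph V) (l : List V) : Prop :=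
  l ≠ [] ∧ l.Nodup ∧
  ∀ (i j : ℕ) (hi : i < l.length) (hj : j < l.length),
    G.Adj (l.get ⟨i, hi⟩) (l.get ⟨j, hj⟩) ↔ (i + 1 = j ∨ j + 1 = i)

/-- Every connected component of the induced subgraph of `G` on `T`
has `w`-weight at most `b`. -/
def CompsSmall {V : Type*} [Fintype V] (G : SimpleGraph V) (w : V → ℕ)
    (T : Set V) (b : ℕ) : Prop :=
  ∀ v ∈ T, wsum w {u | ReachIn G T v u} ≤ b

/-- `x`, `y`, `z` form a triangle in `H`. -/
def Tri {H' : Type*} (H : SimpleGraph H') (x y z : H') : Prop :=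
  H.Adj x y ∧ H.Adj y z ∧ H.Adj x z

/-- An extended strip decomposition `(H, η)` of a graph `G`.
`ηv x` is `η(x)`, `ηe x y` is `η(xy)`, `ηi x y` is the interface `η(xy, x)`,
and `ηt x y z` is `η(xyz)`. -/
structure ESD {V : Type*} {H' : Type*} (G : SimpleGraph V) (H : SimpleGraph H') where
  ηv : H' → Set V
  ηe : H' → H' → Set V
  ηi : H' → H' → Set V
  ηt : H' → H' → H' → Set V
  ηe_symm : ∀ x y, ηe x y = ηe y x
  ηt_symm12 : ∀ x y z, ηt x y z = ηt y x z
  ηt_symm23 : ∀ x y z, ηt x y z = ηt x z y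
  ηe_empty : ∀ x y, ¬ H.Adj x y → ηe x y = ∅
  ηt_empty : ∀ x y z, ¬ Tri H x y z → ηt x y z = ∅
  ηi_sub : ∀ x y, ηi x y ⊆ ηe x y
  cover : ∀ v : V, (∃ x, v ∈ ηv x) ∨ (∃ x y, v ∈ ηe x y) ∨ (∃ x y z, v ∈ ηt x y z)
  disj_vv : ∀ x y, x ≠ y → ηv x ∩ ηv y = ∅
  disj_ve : ∀ x y z, ηv x ∩ ηe y z = ∅
  disj_vt : ∀ x a b c, ηv x ∩ ηt a b c = ∅
  disj_ee : ∀ x y a b, ¬ (x = a ∧ y = b) → ¬ (x = b ∧ y = a) → ηe x y ∩ ηe a b = ∅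
  disj_et : ∀ x y a b c, ηe x y ∩ ηt a b c = ∅
  disj_tt : ∀ a b c d e f, ({a, b, c} : Set H') ≠ ({d, e, f} : Set H') →
    ηt a b c ∩ ηt d e f = ∅
  complete : ∀ x y z, H.Adj x y → H.Adj x z → y ≠ z →
    ∀ u ∈ ηi x y, ∀ v ∈ ηi x z, G.Adj u v
  edge_cond : ∀ u v : V, G.Adj u v →
    (∃ x, u ∈ ηv x ∧ v ∈ ηv x) ∨
    (∃ x y, u ∈ ηe x y ∧ v ∈ ηe x y) ∨
    (∃ x y z, u ∈ ηt x y z ∧ v ∈ ηt x y z) ∨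
    (∃ x y z, H.Adj x y ∧ H.Adj x z ∧ y ≠ z ∧
      ((u ∈ ηi x y ∧ v ∈ ηi x z) ∨ (v ∈ ηi x y ∧ u ∈ ηi x z))) ∨
    (∃ x y, H.Adj x y ∧ ((u ∈ ηi x y ∧ v ∈ ηv x) ∨ (v ∈ ηi x y ∧ u ∈ ηv x))) ∨
    (∃ x y z, Tri H x y z ∧
      ((u ∈ ηt x y z ∧ v ∈ ηi x y ∩ ηi y x) ∨ (v ∈ ηt x y z ∧ u ∈ ηi x y ∩ ηi y x)))

namespace ESD

variable {V : Type*} {H' : Type*} {G : SimpleGraph V} {H : SimpleGraph H'}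

/-- A rigid extended strip decomposition: every edge of `H` has nonempty interfaces
and every isolated vertex `x` of `H` has `η(x) ≠ ∅`. -/
def IsRigid (D : ESD G H) : Prop :=
  (∀ x y, H.Adj x y → (D.ηi x y).Nonempty) ∧
  (∀ x, (∀ y, ¬ H.Adj x y) → (D.ηv x).Nonempty)

/-- A vertex `z` of `G` is peripheral in `(H, η)`. -/
def Peripheral (D : ESD G H) (z : V) : Prop :=
  ∃ x y, H.Adj x y ∧ (∀ u, H.Adj x u → u = y) ∧ D.ηi x y = {z} ∧ D.ηv x = ∅

/-- The full edge particle `A_{pq}^{pq}`. -/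
def fullEdge (D : ESD G H) (p q : H') : Set V :=
  D.ηv p ∪ D.ηv q ∪ D.ηe p q ∪ {v | ∃ r, v ∈ D.ηt p q r}

/-- Every particle of `D` has `w`-weight at most `b`. -/
def ParticlesSmall [Fintype V] (D : ESD G H) (w : V → ℕ) (b : ℕ) : Prop :=
  (∀ x, wsum w (D.ηv x) ≤ b) ∧
  (∀ x y, H.Adj x y → wsum w (D.ηe x y \ (D.ηi x y ∪ D.ηi y x)) ≤ b) ∧
  (∀ x y, H.Adj x y → wsum w (D.ηv x ∪ (D.ηe x y \ D.ηi y x)) ≤ b) ∧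
  (∀ x y, H.Adj x y → wsum w (D.fullEdge x y) ≤ b) ∧
  (∀ x y z, Tri H x y z → wsum w (D.ηt x y z) ≤ b)

end ESD

/-- The subdivided claw `S_{t,t,t}`: a center vertex and three arms of length `t`. -/
def StttRel (t : ℕ) : (Unit ⊕ Fin 3 × Fin t) → (Unit ⊕ Fin 3 × Fin t) → Prop
  | Sum.inl _, Sum.inr p => p.2.val = 0
  | Sum.inr p, Sum.inr q => p.1 = q.1 ∧ p.2.val + 1 = q.2.val
  | _, _ => False

def Sttt (t : ℕ) : SimpleGraph (Unit ⊕ Fin 3 × Fin t) :=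
  SimpleGraph.fromRel (StttRel t)

/-! Call a component heavy if it weighs more than `b = ⌊w(V)/2⌋`; two heavy components of
the same induced subgraph meet, so there is at most one. Grow an induced path `x :: m`,
keeping the heavy component of `G − N[x :: m]` inside a connected set `D ∋ x` that meets
`N[m]` at most in `x`; start from a vertex whose component in `G` is heaviest. A heavy
component `C` of `G − N[x :: m]` is left by a path in `D` from `C` to `x` through an edge `az`
with `a ∈ C`, and then `z ∈ N(x) \ N[m]`. So `z :: x :: m` is an induced path, and `insert z C`
serves as `D` for it while missing `x ∈ D`; as `|D|` drops, the heavy component vanishes. -/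

namespace ReachIn

variable {V : Type*} {G : SimpleGraph V} {T T' : Set V} {a b c : V}

theorem refl : ReachIn G T a a := Relation.ReflTransGen.refl

theorem trans (hab : ReachIn G T a b) (hbc : ReachIn G T b c) : ReachIn G T a c :=
  Relation.ReflTransGen.trans hab hbc

theorem symm (h : ReachIn G T a b) : ReachIn G T b a := by
  induction h with
  | refl => exact refl
  | tail _ hbc ih => exact Relation.ReflTransGen.head ⟨hbc.1.symm, hbc.2.2, hbc.2.1⟩ ih

theorem mono (hT : T ⊆ T') (h : ReachIn G T a b) : ReachIn G T' a b :=
  Relation.ReflTransGen.mono (fun _ _ hxy => ⟨hxy.1, hT hxy.2.1, hT hxy.2.2⟩) _ _ h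

theorem mem_right (ha : a ∈ T) (h : ReachIn G T a b) : b ∈ T := by
  induction h with
  | refl => exact ha
  | tail _ hbc _ => exact hbc.2.2

theorem within_component (h : ReachIn G T a b) : ReachIn G {u | ReachIn G T a u} a b := by
  induction h with
  | refl => exact refl
  | tail hab hbc ih => exact Relation.ReflTransGen.tail ih ⟨hbc.1, hab, hab.tail hbc⟩

theorem exists_adj_of_mem_of_notMem {A : Set V} (h : ReachIn G T a b) (ha : a ∈ A)
    (hb : b ∉ A) : ∃ c ∈ A, ∃ d ∉ A, G.Adj c d ∧ c ∈ T ∧ d ∈ T := by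
  induction h with
  | refl => exact absurd ha hb
  | @tail c d _ hcd ih =>
    by_cases hc : c ∈ A
    · exact ⟨c, hc, d, hb, hcd⟩
    · exact ih hc

end ReachIn

section Weight

variable {V : Type*} [Fintype V] {w : V → ℕ}

theorem wsum_mono {S S' : Set V} (h : S ⊆ S') : wsum w S ≤ wsum w S' :=
  Finset.sum_le_sum_of_subset (Set.Finite.toFinset_subset_toFinset.mpr h)

theorem wsum_add_wsum_le_of_disjoint {S S' : Set V} (h : Disjoint S S') :
    wsum w S + wsum w S' ≤ wsum w Set.univ := by
  classical
  rw [wsum, wsum, ← Finset.sum_union (Set.Finite.disjoint_toFinset.mpr h)]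
  exact Finset.sum_le_sum_of_subset fun u _ => by simp

variable {G : SimpleGraph V} {b : ℕ}

theorem ReachIn.of_lt_wsum (hW : wsum w Set.univ ≤ 2 * b + 1) {T : Set V} {v v' : V}
    (hv : b < wsum w {u | ReachIn G T v u}) (hv' : b < wsum w {u | ReachIn G T v' u}) :
    ReachIn G T v v' := by
  have hmeet : ¬ Disjoint {u | ReachIn G T v u} {u | ReachIn G T v' u} := fun hd =>
    (wsum_add_wsum_le_of_disjoint (w := w) hd).not_gt (by omega)
  obtain ⟨u, hvu, hv'u⟩ := Set.not_disjoint_iff.mp hmeet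
  exact hvu.trans hv'u.symm

theorem comp_subset_of_lt_wsum (hW : wsum w Set.univ ≤ 2 * b + 1) {T T' : Set V} (hT : T' ⊆ T)
    {v v' : V} (hv : b < wsum w {u | ReachIn G T v u})
    (hv' : b < wsum w {u | ReachIn G T' v' u}) :
    {u | ReachIn G T' v' u} ⊆ {u | ReachIn G T v u} := by
  have hsub : {u | ReachIn G T' v' u} ⊆ {u | ReachIn G T v' u} := fun _ => ReachIn.mono hT
  have hvv' := ReachIn.of_lt_wsum hW hv (hv'.trans_le (wsum_mono hsub))
  exact fun u hu => hvv'.trans (hsub hu)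

end Weight

section Paths

variable {V : Type*} {G : SimpleGraph V}

theorem isInducedPathList_singleton (v : V) : IsInducedPathList G [v] := by
  refine ⟨List.cons_ne_nil _ _, List.nodup_singleton v, fun i j hi hj => ?_⟩
  simp only [List.length_singleton, Nat.lt_one_iff] at hi hj
  subst hi hj
  simp

theorem IsInducedPathList.cons {l : List V} (hl : IsInducedPathList G l) {z : V} (hz : z ∉ l)
    (hadj : ∀ (i : ℕ) (hi : i < l.length), G.Adj z l[i] ↔ i = 0) :
    IsInducedPathList G (z :: l) := by
  obtain ⟨-, hnd, hiff⟩ := hl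
  refine ⟨List.cons_ne_nil _ _, List.nodup_cons.mpr ⟨hz, hnd⟩, fun i j hi hj => ?_⟩
  simp only [List.get_eq_getElem]
  rcases i with _ | i <;> rcases j with _ | j
  · simp
  · simp [hadj j (by simpa using hj)]
  · simp [G.adj_comm _ z, hadj i (by simpa using hi)]
  · simpa using hiff i j (by simpa using hi) (by simpa using hj)

theorem mem_closedNbhd_cons {x z : V} {l : List V} :
    z ∈ closedNbhd G {v | v ∈ x :: l} ↔
      z = x ∨ G.Adj x z ∨ z ∈ closedNbhd G {v | v ∈ l} := by
  simp only [closedNbhd, Set.mem_union, Set.mem_ofPred_eq, List.mem_cons, exists_eq_or_imp]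
  tauto

end Paths

section Growth

variable {V : Type*} [Fintype V]

structure GrowthState (G : SimpleGraph V) (w : V → ℕ) (b : ℕ) (x : V) (m : List V)
    (D : Set V) : Prop where
  isInducedPathList : IsInducedPathList G (x :: m)
  mem : x ∈ D
  reachIn : ∀ d ∈ D, ReachIn G D x d
  notMem_closedNbhd : ∀ d ∈ D, d ≠ x → d ∉ closedNbhd G {v | v ∈ m}
  heavy_subset : ∀ v ∈ Set.univ \ closedNbhd G {v | v ∈ x :: m},
    b < wsum w {u | ReachIn G (Set.univ \ closedNbhd G {v | v ∈ x :: m}) v u} →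
    {u | ReachIn G (Set.univ \ closedNbhd G {v | v ∈ x :: m}) v u} ⊆ D

variable {G : SimpleGraph V} {w : V → ℕ} {b : ℕ}

theorem GrowthState.exists_extend (hW : wsum w Set.univ ≤ 2 * b + 1) {x : V} {m : List V}
    {D : Set V} (S : GrowthState G w b x m D) {v : V}
    (hv : v ∈ Set.univ \ closedNbhd G {v | v ∈ x :: m})
    (hheavy : b < wsum w {u | ReachIn G (Set.univ \ closedNbhd G {v | v ∈ x :: m}) v u}) :
    ∃ z D', GrowthState G w b z (x :: m) D' ∧ D'.ncard < D.ncard := by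
  set T := Set.univ \ closedNbhd G {v | v ∈ x :: m}
  set C := {u | ReachIn G T v u}
  have hCT : C ⊆ T := fun _ => ReachIn.mem_right hv
  have hCD : C ⊆ D := S.heavy_subset v hv hheavy
  have hxC : x ∉ C := fun hx => (hCT hx).2 (mem_closedNbhd_cons.mpr (Or.inl rfl))
  obtain ⟨a, (haC : ReachIn G T v a), z, hzC, haz, -, hzD⟩ :=
    (S.reachIn v (hCD ReachIn.refl)).symm.exists_adj_of_mem_of_notMem ReachIn.refl hxC
  have hzN : z ∈ closedNbhd G {v | v ∈ x :: m} := by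
    by_contra hz
    exact hzC (Relation.ReflTransGen.tail haC ⟨haz, hCT haC, Set.mem_univ z, hz⟩)
  have hzx : z ≠ x := by
    rintro rfl
    exact (hCT haC).2 (mem_closedNbhd_cons.mpr (Or.inr (Or.inl haz.symm)))
  have hzm : z ∉ closedNbhd G {v | v ∈ m} := S.notMem_closedNbhd z hzD hzx
  have hxz : G.Adj x z := by
    rcases mem_closedNbhd_cons.mp hzN with h | h | h
    exacts [absurd h hzx, h, absurd h hzm]
  have hpath : IsInducedPathList G (z :: x :: m) := by
    refine S.isInducedPathList.cons ?_ fun i hi => ?_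
    · simp only [List.mem_cons, not_or]
      exact ⟨hzx, fun h => hzm (Or.inl h)⟩
    · rcases i with _ | i
      · simpa using hxz.symm
      · simpa using fun h => hzm (Or.inr ⟨_, List.getElem_mem _, h.symm⟩)
  refine ⟨z, insert z C, ⟨hpath, Set.mem_insert z C, ?_, ?_, ?_⟩, ?_⟩
  · rintro d (rfl | hd)
    · exact ReachIn.refl
    · have hza : ReachIn G (insert z C) z a :=
        Relation.ReflTransGen.single ⟨haz.symm, Set.mem_insert z C, Set.mem_insert_of_mem z haC⟩
      have had : ReachIn G C a d := haC.within_component.symm.trans (ReachIn.within_component hd)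
      exact hza.trans (had.mono (Set.subset_insert z C))
  · rintro d (rfl | hd) hdz
    exacts [absurd rfl hdz, (hCT hd).2]
  · intro v' hv' hv'heavy
    refine (comp_subset_of_lt_wsum hW ?_ hheavy hv'heavy).trans (Set.subset_insert z C)
    exact Set.sdiff_subset_sdiff_right fun u hu => mem_closedNbhd_cons.mpr (Or.inr (Or.inr hu))
  · refine Set.ncard_lt_ncard ?_ (Set.toFinite D)
    exact LE.le.ssubset_of_mem_notMem (Set.insert_subset hzD hCD) S.mem
      (by simp [Ne.symm hzx, hxC])

theorem GrowthState.exists_compsSmall (hW : wsum w Set.univ ≤ 2 * b + 1) {x : V}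
    {m : List V} {D : Set V} (S : GrowthState G w b x m D) :
    ∃ l, IsInducedPathList G l ∧ CompsSmall G w (Set.univ \ closedNbhd G {v | v ∈ l}) b := by
  induction hn : D.ncard using Nat.strong_induction_on generalizing x m D with
  | _ n ih =>
  by_cases hsmall : CompsSmall G w (Set.univ \ closedNbhd G {v | v ∈ x :: m}) b
  · exact ⟨x :: m, S.isInducedPathList, hsmall⟩
  simp only [CompsSmall, not_forall, not_le] at hsmall
  obtain ⟨v, hv, hheavy⟩ := hsmall
  obtain ⟨z, D', S', hlt⟩ := S.exists_extend hW hv hheavy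
  exact ih _ (hn ▸ hlt) S' rfl

theorem exists_growthState [Nonempty V] (hW : wsum w Set.univ ≤ 2 * b + 1) :
    ∃ x, GrowthState G w b x [] {u | ReachIn G Set.univ x u} := by
  obtain ⟨x, hmax⟩ := Finite.exists_max fun x => wsum w {u | ReachIn G Set.univ x u}
  refine ⟨x, isInducedPathList_singleton x, ReachIn.refl, fun d hd => hd.within_component,
    fun d _ _ => by simp [closedNbhd],
    fun v _ hv => comp_subset_of_lt_wsum hW (Set.subset_univ _) ?_ hv⟩
  exact hv.trans_le ((wsum_mono fun _ => ReachIn.mono (Set.subset_univ _)).trans (hmax v))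

end Growth

/-- the Gyárfás path argument. -/
theorem gyarfas_path {V : Type*} [Fintype V] [Nonempty V]
    (G : SimpleGraph V) (w : V → ℕ) :
    ∃ l : List V, IsInducedPathList G l ∧
      CompsSmall G w (Set.univ \ closedNbhd G {v | v ∈ l}) (wsum w Set.univ / 2) := by
  have hW : wsum w Set.univ ≤ 2 * (wsum w Set.univ / 2) + 1 := by omega
  obtain ⟨x, S⟩ := exists_growthState (G := G) hW
  exact S.exists_compsSmall hW
end

section
/- Let (H, η) be a rigid extended strip decomposition of a graph G and let A = A_{xy}^{xy} be a full edge particle for an edge xy of H. Then there exists a set X_A ⊆ V(G) with |X_A| ≤ 2 such that N_G(A) ⊆ N_G(X_A). -/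
/-!
Pick `a ∈ η(pq, p)` and `b ∈ η(pq, q)`, which exist by rigidity. Running through the edge types
of an extended strip decomposition, an edge of `G` leaving `A = A_{pq}^{pq}` can only end in an
interface `η(pz, p)` with `z ≠ q` or `η(qz, q)` with `z ≠ p`. Such a vertex is adjacent to `a`,
resp. `b`, because `η(pq, p)` is complete to `η(pz, p)`. Hence `X_A = {a, b}`.
-/

namespace ESD

variable {V : Type*} {H' : Type*} {G : SimpleGraph V} {H : SimpleGraph H'} (D : ESD G H)
  {s v : V} {p q x y z a b c : H'}

lemma tri_of_mem_ηt (hs : s ∈ D.ηt x y z) : Tri H x y z := by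
  by_contra h
  simp [D.ηt_empty x y z h] at hs

lemma ηt_eq_of_perm (hxy : x ≠ y) (hyz : y ≠ z) (hxz : x ≠ z)
    (hx : x = a ∨ x = b ∨ x = c) (hy : y = a ∨ y = b ∨ y = c) (hz : z = a ∨ z = b ∨ z = c) :
    D.ηt x y z = D.ηt a b c := by
  grind [D.ηt_symm12, D.ηt_symm23]

lemma mem_of_mem_ηt_of_mem_ηt {w : H'} (hs : s ∈ D.ηt x y z) (hs' : s ∈ D.ηt a b c)
    (hw : w = x ∨ w = y ∨ w = z) : w = a ∨ w = b ∨ w = c := by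
  have hset : ({x, y, z} : Set H') = {a, b, c} :=
    by_contra fun h => (D.disj_tt x y z a b c h).subset ⟨hs, hs'⟩
  have hw' : w ∈ ({x, y, z} : Set H') := by simpa using hw
  simpa [hset] using hw'

lemma ηt_eq_of_mem_ηt_of_mem_ηt (hs : s ∈ D.ηt x y z) (hs' : s ∈ D.ηt a b c) :
    D.ηt x y z = D.ηt a b c := by
  obtain ⟨hxy, hyz, hxz⟩ := D.tri_of_mem_ηt hs
  exact D.ηt_eq_of_perm hxy.ne hyz.ne hxz.ne (D.mem_of_mem_ηt_of_mem_ηt hs hs' (by simp))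
    (D.mem_of_mem_ηt_of_mem_ηt hs hs' (by simp)) (D.mem_of_mem_ηt_of_mem_ηt hs hs' (by simp))

lemma fullEdge_comm : D.fullEdge p q = D.fullEdge q p := by
  simp only [fullEdge, D.ηe_symm p q, D.ηt_symm12 p q, Set.union_comm (D.ηv p)]

lemma ηv_subset_fullEdge : D.ηv p ⊆ D.fullEdge p q :=
  fun _ h => Or.inl (Or.inl (Or.inl h))

lemma ηe_subset_fullEdge : D.ηe p q ⊆ D.fullEdge p q :=
  fun _ h => Or.inl (Or.inr h)

lemma ηt_subset_fullEdge : D.ηt p q z ⊆ D.fullEdge p q :=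
  fun _ h => Or.inr ⟨z, h⟩

lemma ηi_subset_fullEdge : D.ηi p q ⊆ D.fullEdge p q :=
  (D.ηi_sub p q).trans D.ηe_subset_fullEdge

lemma eq_or_eq_of_mem_fullEdge_of_mem_ηv (hs : s ∈ D.fullEdge p q) (hx : s ∈ D.ηv x) :
    x = p ∨ x = q := by
  rcases hs with ((h | h) | h) | ⟨r, h⟩
  · exact .inl (by_contra fun hne => (D.disj_vv x p hne).subset ⟨hx, h⟩)
  · exact .inr (by_contra fun hne => (D.disj_vv x q hne).subset ⟨hx, h⟩)
  · exact ((D.disj_ve x p q).subset ⟨hx, h⟩).elim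
  · exact ((D.disj_vt x p q r).subset ⟨hx, h⟩).elim

lemma eq_of_mem_fullEdge_of_mem_ηe (hs : s ∈ D.fullEdge p q) (hx : s ∈ D.ηe x y) :
    x = p ∧ y = q ∨ x = q ∧ y = p := by
  rcases hs with ((h | h) | h) | ⟨r, h⟩
  · exact ((D.disj_ve p x y).subset ⟨h, hx⟩).elim
  · exact ((D.disj_ve q x y).subset ⟨h, hx⟩).elim
  · by_contra hne
    rw [not_or] at hne
    exact (D.disj_ee x y p q hne.1 hne.2).subset ⟨hx, h⟩
  · exact ((D.disj_et x y p q r).subset ⟨hx, h⟩).elim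

lemma exists_mem_ηt_of_mem_fullEdge_of_mem_ηt (hs : s ∈ D.fullEdge p q)
    (hx : s ∈ D.ηt x y z) : ∃ r, s ∈ D.ηt p q r := by
  rcases hs with ((h | h) | h) | ⟨r, h⟩
  · exact ((D.disj_vt p x y z).subset ⟨h, hx⟩).elim
  · exact ((D.disj_vt q x y z).subset ⟨h, hx⟩).elim
  · exact ((D.disj_et p q x y z).subset ⟨h, hx⟩).elim
  · exact ⟨r, h⟩

def outerInterfaces (p q : H') : Set V :=
  {v | ∃ z, H.Adj p z ∧ z ≠ q ∧ v ∈ D.ηi p z} ∪ {v | ∃ z, H.Adj q z ∧ z ≠ p ∧ v ∈ D.ηi q z}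

lemma outerInterfaces_comm : D.outerInterfaces p q = D.outerInterfaces q p :=
  Set.union_comm _ _

lemma mem_fullEdge_or_outerInterfaces_of_mem_ηi (hx : x = p ∨ x = q) (hxy : H.Adj x y)
    (hv : v ∈ D.ηi x y) : v ∈ D.fullEdge p q ∪ D.outerInterfaces p q := by
  wlog hxp : x = p generalizing p q
  · rw [D.fullEdge_comm, D.outerInterfaces_comm]
    exact this hx.symm (hx.resolve_left hxp)
  subst hxp
  by_cases hyq : y = q
  · subst hyq
    exact .inl (D.ηi_subset_fullEdge hv)
  · exact .inr (.inl ⟨y, hxy, hyq, hv⟩)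

lemma adj_of_mem_outerInterfaces {u w : V} (hpq : H.Adj p q) (hu : u ∈ D.ηi p q)
    (hw : w ∈ D.ηi q p) (hv : v ∈ D.outerInterfaces p q) : G.Adj u v ∨ G.Adj w v := by
  rcases hv with ⟨z, hpz, hzq, hv⟩ | ⟨z, hqz, hzp, hv⟩
  · exact .inl (D.complete p q z hpq hpz (Ne.symm hzq) u hu v hv)
  · exact .inr (D.complete q p z hpq.symm hqz (Ne.symm hzp) w hw v hv)

lemma mem_fullEdge_or_outerInterfaces_of_mem_ηt_of_mem_ηi (hs : s ∈ D.fullEdge p q)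
    (hsx : s ∈ D.ηt x y z) (hv : v ∈ D.ηi x y ∩ D.ηi y x) :
    v ∈ D.fullEdge p q ∪ D.outerInterfaces p q := by
  obtain ⟨r, hr⟩ := D.exists_mem_ηt_of_mem_fullEdge_of_mem_ηt hs hsx
  have hxy := (D.tri_of_mem_ηt hsx).1
  rcases D.mem_of_mem_ηt_of_mem_ηt hsx hr (.inl rfl) with hx | hx | hx
  · exact D.mem_fullEdge_or_outerInterfaces_of_mem_ηi (.inl hx) hxy hv.1
  · exact D.mem_fullEdge_or_outerInterfaces_of_mem_ηi (.inr hx) hxy hv.1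
  · have hy : y = p ∨ y = q := by
      rcases D.mem_of_mem_ηt_of_mem_ηt hsx hr (.inr (.inl rfl)) with hy | hy | hy
      exacts [.inl hy, .inr hy, absurd (hx.trans hy.symm) hxy.ne]
    exact D.mem_fullEdge_or_outerInterfaces_of_mem_ηi hy hxy.symm hv.2

lemma mem_fullEdge_or_outerInterfaces_of_adj (hs : s ∈ D.fullEdge p q) (hsv : G.Adj s v) :
    v ∈ D.fullEdge p q ∪ D.outerInterfaces p q := by
  rcases D.edge_cond s v hsv with
      ⟨x, hsx, hvx⟩ | ⟨x, y, hsx, hvx⟩ | ⟨x, y, z, hsx, hvx⟩ |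
      ⟨x, y, z, hxy, hxz, hyz, ⟨hsx, hvx⟩ | ⟨hvx, hsx⟩⟩ |
      ⟨x, y, hxy, ⟨hsx, hvx⟩ | ⟨hvx, hsx⟩⟩ | ⟨x, y, z, -, ⟨hsx, hvx⟩ | ⟨hvx, hsx⟩⟩
  · rcases D.eq_or_eq_of_mem_fullEdge_of_mem_ηv hs hsx with rfl | rfl
    · exact .inl (D.ηv_subset_fullEdge hvx)
    · exact .inl (D.fullEdge_comm ▸ D.ηv_subset_fullEdge hvx)
  · rcases D.eq_of_mem_fullEdge_of_mem_ηe hs hsx with ⟨rfl, rfl⟩ | ⟨rfl, rfl⟩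
    · exact .inl (D.ηe_subset_fullEdge hvx)
    · exact .inl (D.fullEdge_comm ▸ D.ηe_subset_fullEdge hvx)
  · obtain ⟨r, hr⟩ := D.exists_mem_ηt_of_mem_fullEdge_of_mem_ηt hs hsx
    rw [D.ηt_eq_of_mem_ηt_of_mem_ηt hsx hr] at hvx
    exact .inl (D.ηt_subset_fullEdge hvx)
  · rcases D.eq_of_mem_fullEdge_of_mem_ηe hs (D.ηi_sub x y hsx) with ⟨rfl, rfl⟩ | ⟨rfl, rfl⟩
    · exact .inr (.inl ⟨z, hxz, hyz.symm, hvx⟩)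
    · exact .inr (.inr ⟨z, hxz, hyz.symm, hvx⟩)
  · rcases D.eq_of_mem_fullEdge_of_mem_ηe hs (D.ηi_sub x z hsx) with ⟨rfl, rfl⟩ | ⟨rfl, rfl⟩
    · exact .inr (.inl ⟨y, hxy, hyz, hvx⟩)
    · exact .inr (.inr ⟨y, hxy, hyz, hvx⟩)
  · rcases D.eq_of_mem_fullEdge_of_mem_ηe hs (D.ηi_sub x y hsx) with ⟨rfl, -⟩ | ⟨rfl, -⟩
    · exact .inl (D.ηv_subset_fullEdge hvx)
    · exact .inl (D.fullEdge_comm ▸ D.ηv_subset_fullEdge hvx)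
  · exact D.mem_fullEdge_or_outerInterfaces_of_mem_ηi
      (D.eq_or_eq_of_mem_fullEdge_of_mem_ηv hs hsx) hxy hvx
  · exact D.mem_fullEdge_or_outerInterfaces_of_mem_ηt_of_mem_ηi hs hsx hvx
  · rcases D.eq_of_mem_fullEdge_of_mem_ηe hs (D.ηi_sub x y hsx.1) with ⟨rfl, rfl⟩ | ⟨rfl, rfl⟩
    · exact .inl (D.ηt_subset_fullEdge hvx)
    · rw [D.ηt_symm12] at hvx
      exact .inl (D.ηt_subset_fullEdge hvx)

end ESD

/-- the neighborhood of a full edge particle of a rigid extended strip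
decomposition is dominated by at most two vertices. -/
theorem full_edge_particle_dominated {V : Type*} {H' : Type*}
    (G : SimpleGraph V) (H : SimpleGraph H') (D : ESD G H) (hD : D.IsRigid)
    (p q : H') (hpq : H.Adj p q) :
    ∃ X : Finset V, X.card ≤ 2 ∧
      openNbhd G (D.fullEdge p q) ⊆ openNbhd G (↑X : Set V) := by
  classical
  obtain ⟨a, ha⟩ := hD.1 p q hpq
  obtain ⟨b, hb⟩ := hD.1 q p hpq.symm
  have haA : a ∈ D.fullEdge p q := D.ηi_subset_fullEdge ha
  have hbA : b ∈ D.fullEdge p q := D.fullEdge_comm ▸ D.ηi_subset_fullEdge hb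
  refine ⟨{a, b}, Finset.card_le_two, ?_⟩
  rintro v ⟨hvA, s, hsA, hsv⟩
  have hv := (D.mem_fullEdge_or_outerInterfaces_of_adj hsA hsv).resolve_left hvA
  refine ⟨?_, ?_⟩
  · rw [Finset.coe_pair]
    rintro (rfl | rfl) <;> contradiction
  · rcases D.adj_of_mem_outerInterfaces hpq ha hb hv with h | h
    exacts [⟨a, by simp, h⟩, ⟨b, by simp, h⟩]
end

section
/- Let (H, η) be an extended strip decomposition of a graph G and let Q = (x₀, x₁, …, x_k) be an induced path in G whose endpoints x₀ and x_k are peripheral in (H, η). If x_i ∈ η(v) for some vertex v ∈ V(H) and index i, then there exist indices p < i < q and an edge e of H incident to v such that x_p ∈ η(e, v) and x_q ∈ η(e, v). -/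
/-! The vertices of `Q` lying in `η(v)` form runs of consecutive vertices; since the peripheral
endpoints are not in `η(v)`, the run through `x_i` is bounded by vertices `x_p`, `x_q` outside
`η(v)`. A neighbour of `η(v)` outside `η(v)` lies in an interface `η(e, v)`, so `x_p ∈ η(e, v)` and
`x_q ∈ η(f, v)`. Interfaces at `v` along distinct edges are complete to each other, while `x_p` and
`x_q` are non-consecutive vertices of an induced path, hence non-adjacent; so `e = f`. -/

theorem Nat.exists_not_and_succ_of_le {P : ℕ → Prop} {a b : ℕ} (hab : a ≤ b)
    (ha : ¬ P a) (hb : P b) : ∃ n, a ≤ n ∧ n < b ∧ ¬ P n ∧ P (n + 1) := by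
  induction b, hab using Nat.le_induction with
  | base => exact absurd hb ha
  | succ b hab ih =>
    by_cases h : P b
    · obtain ⟨n, han, hnb, hn, hn1⟩ := ih h
      exact ⟨n, han, hnb.trans b.lt_succ_self, hn, hn1⟩
    · exact ⟨b, hab, b.lt_succ_self, h, hb⟩

namespace List

variable {α : Type*} {l : List α} {S : Set α} {i : ℕ}

theorem exists_crossing_before (hi : i < l.length) (hiS : l[i] ∈ S)
    (h0 : l[0]'(i.zero_le.trans_lt hi) ∉ S) :
    ∃ p, ∃ hp : p + 1 < l.length, p < i ∧ l[p] ∉ S ∧ l[p + 1] ∈ S := by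
  obtain ⟨p, -, hpi, hp, hp1l, hp1⟩ := Nat.exists_not_and_succ_of_le
    (P := fun j => ∃ hj : j < l.length, l[j] ∈ S) i.zero_le (fun ⟨_, h⟩ => h0 h) ⟨hi, hiS⟩
  exact ⟨p, hp1l, hpi, fun h => hp ⟨by omega, h⟩, hp1⟩

theorem exists_crossing_after (hi : i < l.length) (hiS : l[i] ∈ S)
    (hlast : l[l.length - 1]'(by omega) ∉ S) :
    ∃ q, ∃ hq : q + 1 < l.length, i ≤ q ∧ l[q] ∈ S ∧ l[q + 1] ∉ S := by
  obtain ⟨q, hiq, hql, hq, hq1⟩ := Nat.exists_not_and_succ_of_le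
    (P := fun j => ¬ ∃ hj : j < l.length, l[j] ∈ S) (Nat.le_sub_one_of_lt hi)
    (fun h => h ⟨hi, hiS⟩) (fun ⟨_, h⟩ => hlast h)
  obtain ⟨_, hq⟩ := not_not.mp hq
  exact ⟨q, by omega, hiq, hq, fun h => hq1 ⟨by omega, h⟩⟩

end List

theorem IsInducedPathList.adj_getElem_iff {V : Type*} {G : SimpleGraph V} {l : List V}
    (hl : IsInducedPathList G l) {j k : ℕ} (hj : j < l.length) (hk : k < l.length) :
    G.Adj l[j] l[k] ↔ j + 1 = k ∨ k + 1 = j := by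
  simpa only [List.get_eq_getElem] using hl.2.2 j k hj hk

namespace ESD

variable {V : Type*} {H' : Type*} {G : SimpleGraph V} {H : SimpleGraph H'} (D : ESD G H)

theorem notMem_ηe_of_mem_ηv {x : V} {v : H'} (hx : x ∈ D.ηv v) (a b : H') :
    x ∉ D.ηe a b := fun h => (D.disj_ve v a b).subset ⟨hx, h⟩

theorem notMem_ηi_of_mem_ηv {x : V} {v : H'} (hx : x ∈ D.ηv v) (a b : H') :
    x ∉ D.ηi a b := fun h => D.notMem_ηe_of_mem_ηv hx a b (D.ηi_sub a b h)

theorem notMem_ηt_of_mem_ηv {x : V} {v : H'} (hx : x ∈ D.ηv v) (a b c : H') :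
    x ∉ D.ηt a b c := fun h => (D.disj_vt v a b c).subset ⟨hx, h⟩

theorem eq_of_mem_ηv {x : V} {v w : H'} (hv : x ∈ D.ηv v) (hw : x ∈ D.ηv w) : v = w := by
  by_contra hvw
  exact (D.disj_vv v w hvw).subset ⟨hv, hw⟩

theorem exists_mem_ηi_of_adj {v : H'} {x y : V} (hx : x ∈ D.ηv v) (hy : y ∉ D.ηv v)
    (hxy : G.Adj x y) : ∃ e, H.Adj v e ∧ y ∈ D.ηi v e := by
  rcases D.edge_cond x y hxy with ⟨a, hxa, hya⟩ | ⟨a, b, hxe, -⟩ | ⟨a, b, c, hxt, -⟩ |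
    ⟨a, b, c, -, -, -, ⟨hxi, -⟩ | ⟨-, hxi⟩⟩ | ⟨a, b, hab, ⟨hxi, -⟩ | ⟨hyi, hxa⟩⟩ |
    ⟨a, b, c, -, ⟨hxt, -⟩ | ⟨-, hxi, -⟩⟩
  · exact absurd (D.eq_of_mem_ηv hxa hx ▸ hya) hy
  · exact absurd hxe (D.notMem_ηe_of_mem_ηv hx a b)
  · exact absurd hxt (D.notMem_ηt_of_mem_ηv hx a b c)
  · exact absurd hxi (D.notMem_ηi_of_mem_ηv hx a b)
  · exact absurd hxi (D.notMem_ηi_of_mem_ηv hx a c)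
  · exact absurd hxi (D.notMem_ηi_of_mem_ηv hx a b)
  · obtain rfl := D.eq_of_mem_ηv hxa hx
    exact ⟨b, hab, hyi⟩
  · exact absurd hxt (D.notMem_ηt_of_mem_ηv hx a b c)
  · exact absurd hxi (D.notMem_ηi_of_mem_ηv hx a b)

theorem eq_of_mem_ηi_of_not_adj {v e f : H'} {x y : V} (he : H.Adj v e) (hf : H.Adj v f)
    (hx : x ∈ D.ηi v e) (hy : y ∈ D.ηi v f) (hxy : ¬ G.Adj x y) : e = f := by
  by_contra hef
  exact hxy (D.complete v e f he hf hef x hx y hy)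

theorem Peripheral.notMem_ηv {D : ESD G H} {z : V} (hz : D.Peripheral z) (v : H') :
    z ∉ D.ηv v := by
  obtain ⟨a, b, -, -, hab, -⟩ := hz
  exact fun h => D.notMem_ηi_of_mem_ηv h a b (hab ▸ rfl)

end ESD

/-- if an induced path between peripheral vertices meets a vertex set
`η(v)`, it enters and leaves through the same interface `η(e, v)`. -/
theorem path_through_vertex_set {V : Type*} {H' : Type*}
    (G : SimpleGraph V) (H : SimpleGraph H') (D : ESD G H)
    (l : List V) (hl : IsInducedPathList G l) (hne : l ≠ [])
    (hx : D.Peripheral (l.head hne)) (hy : D.Peripheral (l.getLast hne)) :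
    ∀ (i : ℕ) (hi : i < l.length) (v : H'), l.get ⟨i, hi⟩ ∈ D.ηv v →
      ∃ (p q : ℕ) (hp : p < l.length) (hq : q < l.length) (e : H'),
        p < i ∧ i < q ∧ H.Adj v e ∧
        l.get ⟨p, hp⟩ ∈ D.ηi v e ∧ l.get ⟨q, hq⟩ ∈ D.ηi v e := by
  intro i hi v hv
  simp only [List.get_eq_getElem] at hv ⊢
  rw [List.head_eq_getElem] at hx
  rw [List.getLast_eq_getElem] at hy
  obtain ⟨p, hp, hpi, hpv, hp1v⟩ := List.exists_crossing_before hi hv (hx.notMem_ηv v)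
  obtain ⟨q, hq, hiq, hqv, hq1v⟩ := List.exists_crossing_after hi hv (hy.notMem_ηv v)
  obtain ⟨e, he, hpe⟩ :=
    D.exists_mem_ηi_of_adj hp1v hpv ((hl.adj_getElem_iff _ _).mpr (by omega))
  obtain ⟨f, hf, hqf⟩ :=
    D.exists_mem_ηi_of_adj hqv hq1v ((hl.adj_getElem_iff _ _).mpr (by omega))
  obtain rfl := D.eq_of_mem_ηi_of_not_adj he hf hpe hqf
    (fun h => by have := (hl.adj_getElem_iff _ _).mp h; omega)
  exact ⟨p, q + 1, by omega, hq, e, hpi, by omega, he, hpe, hqf⟩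
end
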